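/- arXiv:1610.07662 — 2 statements merged into one kernel-verified Lean document; each statement's English description precedes it below -/
import Mathlib

section
/- Let p ∈ ℝ^d be a probability vector with positive entries, and let ρ_n be a sequence of positive reals with ρ_n → ∞. With Σ_ρ = Diag(p) - p pᵀ + (1/ρ) I_d and P = I_d - (1/d) 𝟙 𝟙ᵀ, the matrices P Σ_{ρ_n}^{-1} P converge entrywise to P Diag(p)^{-1} P. -/
open Matrix Filter Topology

/-!
With `ε = 1/ρ`, `Σ = Diag(p + ε) - p pᵀ`, and Sherman–Morrison gives
`Σ⁻¹ = Diag(w) + q qᵀ / (ε s)` with `w = (p + ε)⁻¹`, `q = w ⊙ p = 𝟙 - ε w` and `s = ⟨p, w⟩`: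
the Sherman–Morrison denominator `1 - ⟨p, q⟩` equals `ε s` because `∑ p = 1`.
Any `A`, `B` annihilating `𝟙` (such as the centering matrix `P`) turn the singular rank-one term
into `(ε / s) (A w)(wᵀ B)`, which vanishes as `ε → 0`, while `A Diag(w) B → A Diag(p)⁻¹ B`.
-/

namespace Matrix

variable {K n : Type*} [Field K] [Fintype n] [DecidableEq n]

theorem inv_diagonal_sub_vecMulVec (g u v : n → K) (hg : ∀ i, g i ≠ 0)
    (hc : 1 - v ⬝ᵥ (g⁻¹ * u) ≠ 0) :
    (diagonal g - vecMulVec u v)⁻¹ =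
      diagonal g⁻¹ + (1 - v ⬝ᵥ (g⁻¹ * u))⁻¹ • vecMulVec (g⁻¹ * u) (v * g⁻¹) := by
  refine inv_eq_right_inv ?_
  have hgg : diagonal g * diagonal g⁻¹ = 1 := by
    rw [diagonal_mul_diagonal, ← diagonal_one]
    exact congrArg diagonal (funext fun i => mul_inv_cancel₀ (hg i))
  have hgu : diagonal g *ᵥ (g⁻¹ * u) = u := by
    ext i
    simp [mulVec_diagonal, ← mul_assoc, mul_inv_cancel₀ (hg i)]
  rw [sub_mul, mul_add, mul_add, hgg, Matrix.mul_smul, mul_vecMulVec, hgu, Matrix.mul_smul,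
    vecMulVec_mul_vecMulVec, vecMulVec_mul, vecMulVec_smul, smul_smul]
  have hvg : v ᵥ* diagonal g⁻¹ = v * g⁻¹ := funext (vecMul_diagonal v g⁻¹)
  have hcoef : (1 - v ⬝ᵥ (g⁻¹ * u))⁻¹ - (1 - v ⬝ᵥ (g⁻¹ * u))⁻¹ * (v ⬝ᵥ (g⁻¹ * u)) = 1 := by
    field_simp
  rw [hvg]
  linear_combination (norm := module) hcoef • vecMulVec u (v * g⁻¹)

end Matrix

section MultinomialCov

variable {l m n : Type*}

def multinomialCov [DecidableEq n] (p : n → ℝ) : Matrix n n ℝ := diagonal p - vecMulVec p p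

theorem multinomialCov_add_smul_one [DecidableEq n] (p : n → ℝ) (ε : ℝ) :
    multinomialCov p + ε • 1 = diagonal (fun k => p k + ε) - vecMulVec p p := by
  rw [multinomialCov, smul_one_eq_diagonal, sub_add_eq_add_sub, diagonal_add]

theorem dotProduct_inv_add_pos [Fintype n] {p : n → ℝ} (hp0 : ∀ k, 0 < p k) (hp1 : ∑ k, p k = 1)
    {ε : ℝ} (hε : 0 ≤ ε) : 0 < p ⬝ᵥ (fun k => p k + ε)⁻¹ := by
  have hn : (Finset.univ : Finset n).Nonempty :=
    Finset.nonempty_of_sum_ne_zero (hp1 ▸ one_ne_zero)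
  exact Finset.sum_pos (fun k _ => mul_pos (hp0 k) (inv_pos.2 (by linarith [hp0 k]))) hn

theorem mul_inv_multinomialCov_add_smul_one_mul [Fintype n] [DecidableEq n] {p : n → ℝ}
    (hp0 : ∀ k, 0 < p k) (hp1 : ∑ k, p k = 1) {A : Matrix l n ℝ} {B : Matrix n m ℝ}
    (hA : A *ᵥ 1 = 0) (hB : 1 ᵥ* B = 0) {ε : ℝ} (hε : 0 < ε) :
    A * (multinomialCov p + ε • 1)⁻¹ * B =
      A * diagonal (fun k => p k + ε)⁻¹ * B +
        (ε / p ⬝ᵥ (fun k => p k + ε)⁻¹) •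
          vecMulVec (A *ᵥ (fun k => p k + ε)⁻¹) ((fun k => p k + ε)⁻¹ ᵥ* B) := by
  set g : n → ℝ := fun k => p k + ε
  have hg : ∀ k, g k ≠ 0 := fun k => by simp only [g]; linarith [hp0 k]
  have hq : g⁻¹ * p = 1 - ε • g⁻¹ := by
    ext k
    simp only [Pi.mul_apply, Pi.inv_apply, Pi.sub_apply, Pi.smul_apply, Pi.one_apply, smul_eq_mul]
    field_simp [hg k]
    simp [g]
  have hs := dotProduct_inv_add_pos hp0 hp1 hε.le
  have hc : 1 - p ⬝ᵥ (g⁻¹ * p) = ε * (p ⬝ᵥ g⁻¹) := by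
    rw [hq, dotProduct_sub, dotProduct_smul, dotProduct_one, hp1, smul_eq_mul, sub_sub_cancel]
  have hAq : A *ᵥ (g⁻¹ * p) = -ε • (A *ᵥ g⁻¹) := by
    rw [hq, mulVec_sub, mulVec_smul, hA, zero_sub, neg_smul]
  have hBq : (p * g⁻¹) ᵥ* B = -ε • (g⁻¹ ᵥ* B) := by
    rw [mul_comm, hq, sub_vecMul, smul_vecMul, hB, zero_sub, neg_smul]
  rw [multinomialCov_add_smul_one,
    inv_diagonal_sub_vecMulVec g p p hg (by rw [hc]; exact (mul_pos hε hs).ne'),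
    Matrix.mul_add, Matrix.add_mul, Matrix.mul_smul, Matrix.smul_mul, mul_vecMulVec, vecMulVec_mul,
    hAq, hBq, smul_vecMulVec, vecMulVec_smul, smul_smul, smul_smul, hc]
  congr 2
  field_simp

theorem tendsto_mul_inv_multinomialCov_add_smul_one_mul [Fintype n] [DecidableEq n] {p : n → ℝ}
    (hp0 : ∀ k, 0 < p k) (hp1 : ∑ k, p k = 1) {A : Matrix l n ℝ} {B : Matrix n m ℝ}
    (hA : A *ᵥ 1 = 0) (hB : 1 ᵥ* B = 0) :
    Tendsto (fun ε : ℝ => A * (multinomialCov p + ε • 1)⁻¹ * B) (𝓝[>] 0)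
      (𝓝 (A * diagonal p⁻¹ * B)) := by
  have hw : ContinuousAt (fun ε : ℝ => (fun k => p k + ε)⁻¹) 0 :=
    continuousAt_pi.2 fun k =>
      (continuousAt_const.add continuousAt_id).inv₀ (by simpa using (hp0 k).ne')
  have hF : ContinuousAt (fun ε : ℝ => A * diagonal (fun k => p k + ε)⁻¹ * B +
        (ε / p ⬝ᵥ (fun k => p k + ε)⁻¹) •
          vecMulVec (A *ᵥ (fun k => p k + ε)⁻¹) ((fun k => p k + ε)⁻¹ ᵥ* B)) 0 := by
    fun_prop (disch := exact (dotProduct_inv_add_pos hp0 hp1 le_rfl).ne')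
  have hF0 := hF.tendsto.mono_left (nhdsWithin_le_nhds (s := Set.Ioi 0))
  simp only [add_zero, zero_div, zero_smul] at hF0
  exact hF0.congr' (eventuallyEq_nhdsWithin_of_eqOn fun ε hε =>
    (mul_inv_multinomialCov_add_smul_one_mul hp0 hp1 hA hB hε).symm)

end MultinomialCov

noncomputable def centeringMatrix (d : ℕ) : Matrix (Fin d) (Fin d) ℝ :=
  1 - (1 / (d : ℝ)) • vecMulVec 1 1

theorem centeringMatrix_mulVec_one (d : ℕ) : centeringMatrix d *ᵥ 1 = 0 := by
  ext i
  have hd : (d : ℝ) ≠ 0 := by exact_mod_cast i.pos.ne'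
  rw [centeringMatrix, sub_mulVec, one_mulVec, smul_mulVec, vecMulVec_mulVec]
  simp [one_dotProduct_one, hd]

theorem one_vecMul_centeringMatrix (d : ℕ) : 1 ᵥ* centeringMatrix d = 0 := by
  ext i
  have hd : (d : ℝ) ≠ 0 := by exact_mod_cast i.pos.ne'
  rw [centeringMatrix, vecMul_sub, vecMul_one, vecMul_smul, vecMul_vecMulVec]
  simp [one_dotProduct_one, hd]

theorem projected_inverse_limit_general (d : ℕ) (p : Fin d → ℝ)
    (hp0 : ∀ i, 0 < p i) (hp1 : ∑ i, p i = 1) (ρ : ℕ → ℝ)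
    (hρ : Tendsto ρ atTop atTop) :
    let S : ℝ → Matrix (Fin d) (Fin d) ℝ := fun r =>
      Matrix.diagonal p - Matrix.vecMulVec p p + (1 / r) • (1 : Matrix (Fin d) (Fin d) ℝ)
    let P : Matrix (Fin d) (Fin d) ℝ :=
      1 - (1 / (d : ℝ)) • Matrix.vecMulVec (fun _ => 1) (fun _ => 1)
    ∀ i j, Tendsto (fun n => (P * (S (ρ n))⁻¹ * P) i j) atTop
      (nhds ((P * Matrix.diagonal (fun i => (p i)⁻¹) * P) i j)) := by
  intro S P i j
  have hε : Tendsto (fun n => 1 / ρ n) atTop (𝓝[>] 0) := by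
    simpa only [one_div, Function.comp_def] using tendsto_inv_atTop_nhdsGT_zero.comp hρ
  have hlim := (tendsto_mul_inv_multinomialCov_add_smul_one_mul hp0 hp1
    (centeringMatrix_mulVec_one d) (one_vecMul_centeringMatrix d)).comp hε
  exact tendsto_pi_nhds.1 (tendsto_pi_nhds.1 hlim i) j

theorem projected_inverse_limit (d : ℕ) (hd : 0 < d) (p : Fin d → ℝ)
    (hp0 : ∀ i, 0 < p i) (hp1 : ∑ i, p i = 1) (ρ : ℕ → ℝ)
    (hρpos : ∀ n, 0 < ρ n) (hρ : Tendsto ρ atTop atTop) :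
    let S : ℝ → Matrix (Fin d) (Fin d) ℝ := fun r =>
      Matrix.diagonal p - Matrix.vecMulVec p p + (1 / r) • (1 : Matrix (Fin d) (Fin d) ℝ)
    let P : Matrix (Fin d) (Fin d) ℝ :=
      1 - (1 / (d : ℝ)) • Matrix.vecMulVec (fun _ => 1) (fun _ => 1)
    ∀ i j, Tendsto (fun n => (P * (S (ρ n))⁻¹ * P) i j) atTop
      (nhds ((P * Matrix.diagonal (fun i => (p i)⁻¹) * P) i j)) :=
  projected_inverse_limit_general d p hp0 hp1 ρ hρ
end

section
/- Let p⁰ be a probability vector with positive entries, ρ > 0, and U ∈ ℝ^d. With Σ_ρ = Diag(p⁰) - p⁰(p⁰)ᵀ + (1/ρ)I_d, the quadratic form satisfies Uᵀ Σ_ρ^{-1} U = Σ_{i=1}^d U_i²/(p_i⁰ + 1/ρ) + (ρ / Σ_ℓ [p_ℓ⁰/(p_ℓ⁰ + 1/ρ)]) · (Σ_j [p_j⁰/(p_j⁰ + 1/ρ)] U_j)². -/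
/-!
Σ_ρ is the invertible diagonal matrix `diagonal (p + 1/ρ)` minus the rank-one matrix `p pᵀ`, so
the Sherman–Morrison formula inverts it. Because `∑ pᵢ = 1`, the resulting denominator
`1 - ∑ pᵢ² / (pᵢ + 1/ρ)` equals `(1/ρ) ∑ pᵢ / (pᵢ + 1/ρ)`, which is positive.
-/

open Matrix

namespace Matrix

variable {n K : Type*} [Fintype n] [DecidableEq n] [Field K]

theorem inv_add_vecMulVec {A : Matrix n n K} (hA : IsUnit A.det) (u v : n → K)
    (h : 1 + v ⬝ᵥ (A⁻¹ *ᵥ u) ≠ 0) :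
    (A + vecMulVec u v)⁻¹ =
      A⁻¹ - (1 + v ⬝ᵥ (A⁻¹ *ᵥ u))⁻¹ • vecMulVec (A⁻¹ *ᵥ u) (v ᵥ* A⁻¹) := by
  refine inv_eq_right_inv ?_
  set c := (1 + v ⬝ᵥ (A⁻¹ *ᵥ u))⁻¹
  have hc : c * (1 + v ⬝ᵥ (A⁻¹ *ᵥ u)) = 1 := inv_mul_cancel₀ h
  rw [Matrix.add_mul, Matrix.mul_sub, Matrix.mul_sub, Matrix.mul_smul, Matrix.mul_smul,
    mul_nonsing_inv A hA, mul_vecMulVec, mulVec_mulVec, mul_nonsing_inv A hA, one_mulVec,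
    vecMulVec_mul, vecMulVec_mul_vecMulVec, vecMulVec_smul, smul_smul]
  set X := vecMulVec u (v ᵥ* A⁻¹)
  calc 1 - c • X + (X - (c * v ⬝ᵥ (A⁻¹ *ᵥ u)) • X)
      = 1 + (1 - c * (1 + v ⬝ᵥ (A⁻¹ *ᵥ u))) • X := by module
    _ = 1 := by rw [hc, sub_self, zero_smul, add_zero]

theorem dotProduct_inv_add_vecMulVec_mulVec {A : Matrix n n K} (hA : IsUnit A.det)
    (u v w : n → K) (h : 1 + v ⬝ᵥ (A⁻¹ *ᵥ u) ≠ 0) :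
    w ⬝ᵥ ((A + vecMulVec u v)⁻¹ *ᵥ w) =
      w ⬝ᵥ (A⁻¹ *ᵥ w) - (w ⬝ᵥ (A⁻¹ *ᵥ u)) * (v ⬝ᵥ (A⁻¹ *ᵥ w)) / (1 + v ⬝ᵥ (A⁻¹ *ᵥ u)) := by
  rw [inv_add_vecMulVec hA u v h, sub_mulVec, dotProduct_sub, smul_mulVec, dotProduct_smul,
    vecMulVec_mulVec, ← dotProduct_mulVec v]
  simp only [MulOpposite.smul_eq_mul_unop, MulOpposite.unop_op, dotProduct_smul, smul_eq_mul]
  ring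

theorem inv_diagonal_of_ne_zero {a : n → K} (ha : ∀ i, a i ≠ 0) :
    (diagonal a)⁻¹ = diagonal a⁻¹ :=
  inv_eq_right_inv <| by
    rw [diagonal_mul_diagonal, ← diagonal_one]
    exact congrArg diagonal (funext fun i => mul_inv_cancel₀ (ha i))

theorem dotProduct_inv_diagonal_sub_vecMulVec_mulVec {a : n → K} (ha : ∀ i, a i ≠ 0)
    (u w : n → K) (h : 1 - ∑ i, u i ^ 2 / a i ≠ 0) :
    w ⬝ᵥ ((diagonal a - vecMulVec u u)⁻¹ *ᵥ w) =
      ∑ i, w i ^ 2 / a i + (∑ i, u i / a i * w i) ^ 2 / (1 - ∑ i, u i ^ 2 / a i) := by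
  have hA : IsUnit (diagonal a).det := by
    simpa [det_diagonal, Finset.prod_ne_zero_iff] using ha
  have hdiag : ∀ x y : n → K, x ⬝ᵥ ((diagonal a)⁻¹ *ᵥ y) = ∑ i, x i * y i / a i := by
    intro x y
    simp only [inv_diagonal_of_ne_zero ha, dotProduct, mulVec_diagonal, Pi.inv_apply]
    exact Finset.sum_congr rfl fun i _ => by ring
  have hden : 1 + u ⬝ᵥ ((diagonal a)⁻¹ *ᵥ -u) = 1 - ∑ i, u i ^ 2 / a i := by
    rw [hdiag, sub_eq_add_neg, ← Finset.sum_neg_distrib]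
    exact congrArg _ (Finset.sum_congr rfl fun i _ => by rw [Pi.neg_apply]; ring)
  rw [sub_eq_add_neg, ← neg_vecMulVec, dotProduct_inv_add_vecMulVec_mulVec hA _ _ _ (hden ▸ h),
    hden, hdiag, hdiag, hdiag]
  have hsq : ∑ i, w i * w i / a i = ∑ i, w i ^ 2 / a i :=
    Finset.sum_congr rfl fun i _ => by ring
  have hneg : ∑ i, w i * (-u) i / a i = -∑ i, u i / a i * w i := by
    rw [← Finset.sum_neg_distrib]
    exact Finset.sum_congr rfl fun i _ => by rw [Pi.neg_apply]; ring
  have hcomm : ∑ i, u i * w i / a i = ∑ i, u i / a i * w i :=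
    Finset.sum_congr rfl fun i _ => by ring
  rw [hsq, hneg, hcomm]
  ring

end Matrix

theorem one_sub_sum_sq_div_add {ι K : Type*} [Fintype ι] [Field K] {p : ι → K}
    (hp : ∑ i, p i = 1) {t : K} (ht : ∀ i, p i + t ≠ 0) :
    1 - ∑ i, p i ^ 2 / (p i + t) = t * ∑ i, p i / (p i + t) := by
  rw [← hp, ← Finset.sum_sub_distrib, Finset.mul_sum]
  refine Finset.sum_congr rfl fun i _ => ?_
  field_simp [ht i]
  ring

theorem unprojected_statistic_closed_form_general (d : ℕ) (p : Fin d → ℝ)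
    (hp0 : ∀ i, 0 < p i) (hp1 : ∑ i, p i = 1) (ρ : ℝ) (hρ : 0 < ρ) (U : Fin d → ℝ) :
    let Sρ : Matrix (Fin d) (Fin d) ℝ :=
      Matrix.diagonal p - Matrix.vecMulVec p p + (1 / ρ) • (1 : Matrix (Fin d) (Fin d) ℝ)
    U ⬝ᵥ (Sρ⁻¹ *ᵥ U) =
      (∑ i, (U i) ^ 2 / (p i + 1 / ρ)) +
        (ρ / ∑ l, p l / (p l + 1 / ρ)) * (∑ j, (p j / (p j + 1 / ρ)) * U j) ^ 2 := by
  intro Sρ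
  have ha : ∀ i, p i + 1 / ρ ≠ 0 := fun i => by have := hp0 i; positivity
  have hS : Sρ = diagonal (fun i => p i + 1 / ρ) - vecMulVec p p := by
    rw [show Sρ = diagonal p - vecMulVec p p + (1 / ρ) • 1 from rfl, sub_add_eq_add_sub,
      smul_one_eq_diagonal, diagonal_add]
  have hs : 0 < ∑ l, p l / (p l + 1 / ρ) :=
    Finset.sum_pos (fun i _ => by have := hp0 i; positivity)
      (Finset.nonempty_of_sum_ne_zero (hp1 ▸ one_ne_zero))
  have hden := one_sub_sum_sq_div_add hp1 ha
  rw [hS, dotProduct_inv_diagonal_sub_vecMulVec_mulVec ha p U (by rw [hden]; positivity), hden,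
    one_div_mul_eq_div, div_div_eq_mul_div, div_mul_eq_mul_div, mul_comm ρ]

theorem unprojected_statistic_closed_form (d : ℕ) (hd : 0 < d) (p : Fin d → ℝ)
    (hp0 : ∀ i, 0 < p i) (hp1 : ∑ i, p i = 1) (ρ : ℝ) (hρ : 0 < ρ) (U : Fin d → ℝ) :
    let Sρ : Matrix (Fin d) (Fin d) ℝ :=
      Matrix.diagonal p - Matrix.vecMulVec p p + (1 / ρ) • (1 : Matrix (Fin d) (Fin d) ℝ)
    U ⬝ᵥ (Sρ⁻¹ *ᵥ U) =
      (∑ i, (U i) ^ 2 / (p i + 1 / ρ)) +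
        (ρ / ∑ l, p l / (p l + 1 / ρ)) * (∑ j, (p j / (p j + 1 / ρ)) * U j) ^ 2 :=
  unprojected_statistic_closed_form_general d p hp0 hp1 ρ hρ U
end
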